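/- Let g be a finite-dimensional (G,ε)-color Lie algebra, (g[[t]],μ_t = Σ t^n μ_n) a graded deformation of g, and (U(g)[[t]], π_t = Σ t^n π_n) the induced graded associative deformation of U(g) obtained via the PBW isomorphism Φ with U(g[[t]]). Then π₁ is a graded Hochschild 2-cocycle of U(g) (with coefficients in U(g) itself), and its restriction to g satisfies μ₁(X,Y) = π₁(X,Y) − ε(|X|,|Y|) π₁(Y,X) for all homogeneous X, Y ∈ g. -/

import Mathlib

open scoped DirectSum TensorProduct

/-! Common definitions: color Lie algebras over an abelian group `G` with an
antisymmetric bicharacter `ε`, their universal enveloping algebras, the canonical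
filtration and associated graded objects, and formal graded deformations. -/

/-- An antisymmetric bicharacter `ε : G × G → Rˣ` (values taken in `R`). -/
def IsBicharacter {R : Type*} [CommRing R] {G : Type*} [CommGroup G]
    (ε : G → G → R) : Prop :=
  (∀ g h, ε g h * ε h g = 1) ∧
  (∀ g h k, ε g (h * k) = ε g h * ε g k) ∧
  (∀ g h k, ε (g * h) k = ε g k * ε h k)

/-- A `(G,ε)`-color Lie algebra structure on an `R`-module `L`:
a `G`-grading (with `L` the internal direct sum of the homogeneous components),
together with a bilinear bracket which respects the grading, is `ε`-antisymmetric
and satisfies the `ε`-Jacobi identity on homogeneous elements. -/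
structure ColorLie (R : Type*) [CommRing R] (G : Type*) [CommGroup G] [DecidableEq G]
    (ε : G → G → R) (L : Type*) [AddCommGroup L] [Module R L] : Type _ where
  grading : G → Submodule R L
  internal : DirectSum.IsInternal grading
  bracket : L →ₗ[R] L →ₗ[R] L
  bracket_grade : ∀ {g h : G} {a b : L}, a ∈ grading g → b ∈ grading h →
    bracket a b ∈ grading (g * h)
  bracket_antisymm : ∀ {g h : G} {a b : L}, a ∈ grading g → b ∈ grading h →
    bracket a b = -(ε g h) • bracket b a
  bracket_jacobi : ∀ {g h k : G} {a b c : L}, a ∈ grading g → b ∈ grading h →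
    c ∈ grading k →
    ε k g • bracket a (bracket b c) + ε g h • bracket b (bracket c a) +
      ε h k • bracket c (bracket a b) = 0

namespace ColorLie

variable {R : Type*} [CommRing R] {G : Type*} [CommGroup G] [DecidableEq G]
  {ε : G → G → R} {L : Type*} [AddCommGroup L] [Module R L]

/-- The relation on the tensor algebra whose induced quotient is the universal
enveloping algebra: `a ⊗ b - ε(|a|,|b|) b ⊗ a ~ [a,b]` for homogeneous `a, b`. -/
inductive Rel (cl : ColorLie R G ε L) :
    TensorAlgebra R L → TensorAlgebra R L → Prop
  | mk {g h : G} {a b : L} (ha : a ∈ cl.grading g) (hb : b ∈ cl.grading h) :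
      Rel cl (TensorAlgebra.ι R a * TensorAlgebra.ι R b
          - ε g h • (TensorAlgebra.ι R b * TensorAlgebra.ι R a))
        (TensorAlgebra.ι R (cl.bracket a b))

/-- The universal enveloping algebra `U(L) = T(L)/J(L)` of a color Lie algebra. -/
abbrev U (cl : ColorLie R G ε L) : Type _ := RingQuot cl.Rel

/-- The canonical map `i : L → U(L)`. -/
noncomputable def ιU (cl : ColorLie R G ε L) : L →ₗ[R] cl.U :=
  (RingQuot.mkAlgHom R cl.Rel).toLinearMap ∘ₗ TensorAlgebra.ι R

/-- The relation on the tensor algebra defining the color symmetric algebra: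
`a ⊗ b ~ ε(|a|,|b|) b ⊗ a` for homogeneous `a, b`. -/
inductive SymRel (cl : ColorLie R G ε L) :
    TensorAlgebra R L → TensorAlgebra R L → Prop
  | mk {g h : G} {a b : L} (ha : a ∈ cl.grading g) (hb : b ∈ cl.grading h) :
      SymRel cl (TensorAlgebra.ι R a * TensorAlgebra.ι R b)
        (ε g h • (TensorAlgebra.ι R b * TensorAlgebra.ι R a))

/-- The color symmetric algebra `S(L) = T(L)/I(L)`. -/
abbrev SymAlg (cl : ColorLie R G ε L) : Type _ := RingQuot cl.SymRel

/-- The canonical map `L → S(L)`. -/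
noncomputable def ιS (cl : ColorLie R G ε L) : L →ₗ[R] cl.SymAlg :=
  (RingQuot.mkAlgHom R cl.SymRel).toLinearMap ∘ₗ TensorAlgebra.ι R

/-- The degree-`g` component of the `G`-grading of `U(L)`: the span of the
monomials `i(a₁) ⋯ i(aₖ)` with `aⱼ` homogeneous and the product of the degrees
equal to `g`. -/
noncomputable def Udeg (cl : ColorLie R G ε L) (g : G) : Submodule R cl.U :=
  Submodule.span R { x : cl.U | ∃ l : List (G × L),
    (∀ p ∈ l, p.2 ∈ cl.grading p.1) ∧ (l.map Prod.fst).prod = g ∧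
    x = (l.map fun p => cl.ιU p.2).prod }

/-- The `n`-th piece `U^n(L)` of the canonical filtration of `U(L)`: the span of
products of at most `n` elements of (the image of) `L`. -/
noncomputable def Ufilt (cl : ColorLie R G ε L) (n : ℕ) : Submodule R cl.U :=
  Submodule.span R { x : cl.U | ∃ l : List L, l.length ≤ n ∧
    x = (l.map fun a => cl.ιU a).prod }

/-- `U^{n-1}(L)`, with the convention `U^{-1}(L) = 0`. -/
noncomputable def UfiltPred (cl : ColorLie R G ε L) : ℕ → Submodule R cl.U
  | 0 => ⊥
  | n + 1 => cl.Ufilt n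

/-- `U^{n-1}(L)` viewed as a submodule of `U^n(L)`. -/
noncomputable def grSub (cl : ColorLie R G ε L) (n : ℕ) : Submodule R (cl.Ufilt n) :=
  Submodule.comap (cl.Ufilt n).subtype (cl.UfiltPred n)

/-- The `n`-th piece `gr^n(U(L)) = U^n(L)/U^{n-1}(L)` of the associated graded algebra. -/
noncomputable instance instAddCommGroupUfilt (cl : ColorLie R G ε L) (n : ℕ) : AddCommGroup (cl.Ufilt n) :=
  Submodule.addCommGroup (M := cl.U) (cl.Ufilt n)

abbrev grU (cl : ColorLie R G ε L) (n : ℕ) : Type _ := cl.Ufilt n ⧸ cl.grSub n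

/-- The canonical projection `π_n : U^n(L) → gr^n(U(L))`. -/
noncomputable def πgr (cl : ColorLie R G ε L) (n : ℕ) : cl.Ufilt n →ₗ[R] cl.grU n :=
  (cl.grSub n).mkQ

/-- The degree-`g` component (for `g ∈ G`) of `gr^n(U(L))`. -/
noncomputable def grUdeg (cl : ColorLie R G ε L) (n : ℕ) (g : G) :
    Submodule R (cl.grU n) :=
  Submodule.map (cl.grSub n).mkQ
    (Submodule.comap (cl.Ufilt n).subtype (cl.Udeg g))

/-- The `(ℕ,G)`-bigraded piece of the color symmetric algebra: span of products of
exactly `n` generators (for the ℕ-grading). -/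
noncomputable def SdegZ (cl : ColorLie R G ε L) (n : ℕ) : Submodule R cl.SymAlg :=
  Submodule.span R { x : cl.SymAlg | ∃ l : List L, l.length = n ∧
    x = (l.map fun a => cl.ιS a).prod }

/-- The degree-`g` component of the `G`-grading of `S(L)`. -/
noncomputable def SdegG (cl : ColorLie R G ε L) (g : G) : Submodule R cl.SymAlg :=
  Submodule.span R { x : cl.SymAlg | ∃ l : List (G × L),
    (∀ p ∈ l, p.2 ∈ cl.grading p.1) ∧ (l.map Prod.fst).prod = g ∧
    x = (l.map fun p => cl.ιS p.2).prod }

/-- A graded deformation `μ_t = Σ tⁿ μ_n` of a color Lie algebra `(L, μ₀)`: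
every coefficient `μ_n` is a bilinear map of degree `e`, the family is
`ε`-antisymmetric and satisfies the `ε`-Jacobi identity order by order in `t`,
and `μ 0` is the original bracket. -/
structure Deformation (cl : ColorLie R G ε L) : Type _ where
  μ : ℕ → L →ₗ[R] L →ₗ[R] L
  init : μ 0 = cl.bracket
  graded : ∀ (n : ℕ) {g h : G} {a b : L}, a ∈ cl.grading g → b ∈ cl.grading h →
    μ n a b ∈ cl.grading (g * h)
  antisymm : ∀ (n : ℕ) {g h : G} {a b : L}, a ∈ cl.grading g → b ∈ cl.grading h →
    μ n a b = -(ε g h) • μ n b a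
  jacobi : ∀ (r : ℕ) {g h k : G} {a b c : L}, a ∈ cl.grading g →
    b ∈ cl.grading h → c ∈ cl.grading k →
    ∑ s ∈ Finset.range (r + 1),
      (ε k g • μ s a (μ (r - s) b c) + ε g h • μ s b (μ (r - s) c a) +
        ε h k • μ s c (μ (r - s) a b)) = 0

/-- A graded deformation is trivial iff it is equivalent to the undeformed bracket
via a graded formal automorphism `f = id + t f₁ + t² f₂ + ⋯` with each `f_n` of
degree `e`. -/
def Deformation.IsTrivial {cl : ColorLie R G ε L} (D : cl.Deformation) : Prop :=
  ∃ f : ℕ → L →ₗ[R] L, f 0 = LinearMap.id ∧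
    (∀ (n : ℕ) {g : G} {a : L}, a ∈ cl.grading g → f n a ∈ cl.grading g) ∧
    ∀ (r : ℕ) (a b : L),
      ∑ s ∈ Finset.range (r + 1), f s (D.μ (r - s) a b) =
      ∑ q ∈ Finset.range (r + 1), cl.bracket (f q a) (f (r - q) b)

/-- `ψ` is a graded Chevalley–Eilenberg 2-cocycle of degree `e` of `L` with values
in the adjoint module `L`. -/
def IsCocycle2Adj (cl : ColorLie R G ε L) (ψ : L →ₗ[R] L →ₗ[R] L) : Prop :=
  (∀ {g h : G} {a b : L}, a ∈ cl.grading g → b ∈ cl.grading h →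
    ψ a b ∈ cl.grading (g * h)) ∧
  (∀ {g h : G} {a b : L}, a ∈ cl.grading g → b ∈ cl.grading h →
    ψ a b = -(ε g h) • ψ b a) ∧
  (∀ {g h k : G} {x y z : L}, x ∈ cl.grading g → y ∈ cl.grading h →
    z ∈ cl.grading k →
    cl.bracket x (ψ y z) - ε g h • cl.bracket y (ψ x z)
      + (ε g k * ε h k) • cl.bracket z (ψ x y)
      - ε g h • ψ (cl.bracket x y) z + (ε g k * ε h k) • ψ (cl.bracket x z) y
      - (ε g h * ε g k * ε h k) • ψ (cl.bracket y z) x = 0)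

/-- `ψ` is a graded Chevalley–Eilenberg 2-coboundary of degree `e` with values in
the adjoint module: `ψ = δ_CE f` for some degree-`e` 1-cochain `f`. -/
def IsCoboundary2Adj (cl : ColorLie R G ε L) (ψ : L →ₗ[R] L →ₗ[R] L) : Prop :=
  ∃ f : L →ₗ[R] L, (∀ {g : G} {a : L}, a ∈ cl.grading g → f a ∈ cl.grading g) ∧
    ∀ {g h : G} {x y : L}, x ∈ cl.grading g → y ∈ cl.grading h →
      ψ x y = cl.bracket x (f y) - ε g h • cl.bracket y (f x) - f (cl.bracket x y)

/-- `ω` is a graded Chevalley–Eilenberg 2-cocycle of degree `e` of `L` with values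
in the trivial module `R` (concentrated in degree `e`). -/
def IsCocycleTriv (cl : ColorLie R G ε L) (ω : L →ₗ[R] L →ₗ[R] R) : Prop :=
  (∀ {g h : G} {a b : L}, a ∈ cl.grading g → b ∈ cl.grading h → g * h ≠ 1 →
    ω a b = 0) ∧
  (∀ {g h : G} {a b : L}, a ∈ cl.grading g → b ∈ cl.grading h →
    ω a b = -(ε g h) * ω b a) ∧
  (∀ {g h k : G} {x y z : L}, x ∈ cl.grading g → y ∈ cl.grading h →
    z ∈ cl.grading k →
    -(ε g h) * ω (cl.bracket x y) z + (ε g k * ε h k) * ω (cl.bracket x z) y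
      - (ε g h * ε g k * ε h k) * ω (cl.bracket y z) x = 0)

/-- `ω` is a graded 2-coboundary of degree `e` with values in the trivial module `R`. -/
def IsCoboundaryTriv (cl : ColorLie R G ε L) (ω : L →ₗ[R] L →ₗ[R] R) : Prop :=
  ∃ f : L →ₗ[R] R, (∀ {g : G} {a : L}, a ∈ cl.grading g → g ≠ 1 → f a = 0) ∧
    ∀ {g h : G} {x y : L}, x ∈ cl.grading g → y ∈ cl.grading h →
      ω x y = -(f (cl.bracket x y))

end ColorLie

/-- A graded associative (formal) deformation `π_t = Σ tⁿ π_n` of a `G`-graded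
associative algebra `A` (with grading `𝒜`): `π₀` is the original multiplication,
every coefficient `π_n` is of degree `e`, and `π_t` is associative order by
order in `t`. -/
structure AssocDeformation (R : Type*) (G : Type*) [CommRing R] [CommGroup G]
    (A : Type*) [Ring A] [Algebra R A] (𝒜 : G → Submodule R A) : Type _ where
  π : ℕ → A →ₗ[R] A →ₗ[R] A
  init : ∀ a b : A, π 0 a b = a * b
  graded : ∀ (n : ℕ) {g h : G} {a b : A}, a ∈ 𝒜 g → b ∈ 𝒜 h → π n a b ∈ 𝒜 (g * h)
  assoc : ∀ (r : ℕ) (a b c : A),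
    ∑ s ∈ Finset.range (r + 1), π s (π (r - s) a b) c =
    ∑ s ∈ Finset.range (r + 1), π s a (π (r - s) b c)

/-- A graded associative deformation is trivial iff it is conjugate to the
undeformed multiplication by a graded formal isomorphism
`φ_t = id + t φ₁ + t² φ₂ + ⋯` with each `φ_r` of degree `e`. -/
def AssocDeformation.IsTrivial {R G A : Type*} [CommRing R] [CommGroup G]
    [Ring A] [Algebra R A] {𝒜 : G → Submodule R A}
    (D : AssocDeformation R G A 𝒜) : Prop :=
  ∃ f : ℕ → A →ₗ[R] A, f 0 = LinearMap.id ∧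
    (∀ (n : ℕ) {g : G} {a : A}, a ∈ 𝒜 g → f n a ∈ 𝒜 g) ∧
    ∀ (r : ℕ) (a b : A),
      ∑ s ∈ Finset.range (r + 1), f s (D.π (r - s) a b) =
      ∑ q ∈ Finset.range (r + 1), f q a * f (r - q) b
/-- The space of linear maps `M → M` homogeneous of degree `α` with respect to a
`G`-grading `ℳ` of `M`. -/
def HomDeg {R : Type*} [CommRing R] {G : Type*} [CommGroup G]
    {M : Type*} [AddCommGroup M] [Module R M]
    (ℳ : G → Submodule R M) (α : G) : Submodule R (M →ₗ[R] M) where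
  carrier := { f | ∀ (β : G), ∀ x ∈ ℳ β, f x ∈ ℳ (α * β) }
  add_mem' := by
    intro f g hf hg β x hx
    simpa using add_mem (hf β x hx) (hg β x hx)
  zero_mem' := by
    intro β x hx
    simp
  smul_mem' := by
    intro c f hf β x hx
    simpa using Submodule.smul_mem _ c (hf β x hx)

/-- The graded Chevalley–Eilenberg coboundary operator, on cochains recorded
together with the degrees of their (homogeneous) arguments.  For a cochain `f`
of degree `γ`, arguments `x` with degrees `α`,
`δf(x₁,…,x_{n+2}) = Σᵢ (-1)^{i+1} ε(γ,αᵢ) εᵢ xᵢ · f(…,x̂ᵢ,…)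
  + Σ_{i<j} (-1)^{i+j} ε(γ,αᵢ) ε(γ,αⱼ) εᵢ εⱼ f([xᵢ,xⱼ],…,x̂ᵢ,…,x̂ⱼ,…)`
with `εᵢ = Π_{h<i} ε(α_h,αᵢ)` (indices are 1-based in the informal formula). -/
def ceD {R : Type*} [CommRing R] {G : Type*} [CommGroup G]
    {L : Type*} [AddCommGroup L] [Module R L]
    {N : Type*} [AddCommGroup N] [Module R N]
    (ε : G → G → R) (bracket : L →ₗ[R] L →ₗ[R] L) (ρ : L →ₗ[R] N →ₗ[R] N)
    (γ : G) {n : ℕ}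
    (f : (Fin (n + 1) → G) → (Fin (n + 1) → L) → N)
    (α : Fin (n + 2) → G) (x : Fin (n + 2) → L) : N :=
  (∑ i : Fin (n + 2),
    ((-1 : ℤ) ^ (i : ℕ)) •
      ((ε γ (α i) * ∏ h ∈ Finset.univ.filter (fun h : Fin (n + 2) => h < i),
          ε (α h) (α i)) •
        ρ (x i) (f (Fin.removeNth i α) (Fin.removeNth i x))))
  + ∑ i : Fin (n + 2), ∑ j : Fin (n + 2),
      if hij : i < j then
        ((-1 : ℤ) ^ ((i : ℕ) + (j : ℕ))) •
          ((ε γ (α i) * ε γ (α j) *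
            (∏ h ∈ Finset.univ.filter (fun h : Fin (n + 2) => h < i), ε (α h) (α i)) *
            (∏ h ∈ Finset.univ.filter (fun h : Fin (n + 2) => h < j), ε (α h) (α j))) •
            f (Fin.cons (α i * α j)
                (Fin.removeNth ⟨i.1, by
                  have h1 := j.isLt
                  have h2 : (i : ℕ) < (j : ℕ) := hij
                  omega⟩ (Fin.removeNth j α)))
              (Fin.cons (bracket (x i) (x j))
                (Fin.removeNth ⟨i.1, by
                  have h1 := j.isLt
                  have h2 : (i : ℕ) < (j : ℕ) := hij
                  omega⟩ (Fin.removeNth j x))))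
      else 0

namespace ColorLie

variable {R : Type*} [CommRing R] {G : Type*} [CommGroup G] [DecidableEq G]
  {ε : G → G → R} {L : Type*} [AddCommGroup L] [Module R L]

/-- The `n`-th coefficient of the star product induced on the associated graded
algebra by a symmetrization isomorphism `ω`:
for `u ∈ gr^p(U(L))`, `v ∈ gr^q(U(L))`,
`m_n(u,v) = ω⁻¹((ω(u) ∘ ω(v))_{p+q-n}) ∈ gr^{p+q-n}(U(L))`. -/
noncomputable def starCoef (cl : ColorLie R G ε L)
    (ω : (⨁ n : ℕ, cl.grU n) ≃ₗ[R] cl.U) (n p q : ℕ)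
    (u : cl.grU p) (v : cl.grU q) : cl.grU (p + q - n) :=
  DirectSum.component R ℕ (fun m => cl.grU m) (p + q - n)
    (ω.symm (ω (DirectSum.lof R ℕ (fun m => cl.grU m) p u) *
      ω (DirectSum.lof R ℕ (fun m => cl.grU m) q v)))

end ColorLie

/-- Extraction of the `n`-th power series coefficient of an element of
`R[[t]] ⊗ M`, i.e. of "`M[[t]]`" for `M` finite dimensional. -/
noncomputable def coeffPS (K : Type*) [CommRing K] (M : Type*) [AddCommGroup M]
    [Module K M] (n : ℕ) : (PowerSeries K ⊗[K] M) →ₗ[K] M :=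
  (TensorProduct.lid K M).toLinearMap ∘ₗ LinearMap.rTensor M (PowerSeries.coeff n)

/-- The relation whose `RingQuot` is the quotient of `A` by the two-sided ideal
generated by `1 - c`. -/
def unitRel {A : Type*} [Ring A] (c : A) : A → A → Prop := fun x y => x = 1 ∧ y = c

/-- The Poincaré–Birkhoff–Witt admissibility condition on an ordered monomial:
indices weakly increase, with strict increase required at an index `i` whenever
`ε(|x_i|,|x_i|) ≠ 1`. -/
def PBWAdmissible {R : Type*} [CommRing R] {G : Type*} [CommGroup G]
    {I : Type*} [LinearOrder I] (ε : G → G → R) (deg : I → G) (l : List I) : Prop :=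
  l.Chain' fun i j => i < j ∨ (i = j ∧ ε (deg i) (deg i) = 1)

/-! Write `x ⋆ y = Φ⁻¹(Φ x · Φ y)` for the product of `U(g[[t]])` transported to `U(g)[[t]]`.
It is associative and `K[[t]]`-bilinear, so comparing the coefficients of `t` in
`(a ⋆ b) ⋆ c = a ⋆ (b ⋆ c)` shows that `π₁` is a Hochschild cocycle once `π₀` is the product of
`U(g)`. This holds because `Φ` is the identity modulo `t`: setting `t = 0` is a ring map
`U(g[[t]]) → U(g)` which sends PBW monomials to PBW monomials.

Homogeneity of `π₁` comes from PBW straightening, which rewrites any monomial, in `U(g)` as in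
`U(g[[t]])`, as a combination of admissible monomials of the same degree. Finally, for `X, Y ∈ g`
the relation `XY - ε(|X|,|Y|) YX = [X, Y]_t` of `U(g[[t]])`, pulled back along `Φ`, gives
`μ₁(X, Y)` in degree `t`. -/

open scoped PowerSeries

section CoeffPS

variable {K : Type*} [CommRing K] {M N : Type*} [AddCommGroup M] [Module K M]
  [AddCommGroup N] [Module K N]

theorem smul_one_tmul (f : K⟦X⟧) (m : M) : f • ((1 : K⟦X⟧) ⊗ₜ[K] m) = f ⊗ₜ m := by
  rw [TensorProduct.smul_tmul', smul_eq_mul, mul_one]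

theorem coeffPS_tmul (n : ℕ) (f : K⟦X⟧) (m : M) :
    coeffPS K M n (f ⊗ₜ[K] m) = PowerSeries.coeff n f • m := by
  simp [coeffPS]

theorem coeffPS_one_tmul (n : ℕ) (m : M) :
    coeffPS K M n ((1 : K⟦X⟧) ⊗ₜ[K] m) = if n = 0 then m else 0 := by
  rw [coeffPS_tmul, PowerSeries.coeff_one]
  split <;> simp

theorem coeffPS_smul (n : ℕ) (f : K⟦X⟧) (z : K⟦X⟧ ⊗[K] M) :
    coeffPS K M n (f • z) =
      ∑ s ∈ Finset.range (n + 1), PowerSeries.coeff s f • coeffPS K M (n - s) z := by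
  induction z using TensorProduct.induction_on with
  | zero => simp
  | tmul g m =>
      rw [TensorProduct.smul_tmul', smul_eq_mul, coeffPS_tmul, PowerSeries.coeff_mul,
        Finset.Nat.sum_antidiagonal_eq_sum_range_succ_mk]
      simp [coeffPS_tmul, Finset.sum_smul, mul_smul]
  | add x y hx hy =>
      simp only [smul_add, map_add, hx, hy, ← Finset.sum_add_distrib]

theorem coeffPS_zero_smul (f : K⟦X⟧) (z : K⟦X⟧ ⊗[K] M) :
    coeffPS K M 0 (f • z) = PowerSeries.constantCoeff f • coeffPS K M 0 z := by
  simp [coeffPS_smul]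

theorem C_smul_eq_smul (c : K) (z : K⟦X⟧ ⊗[K] M) : PowerSeries.C c • z = c • z :=
  algebraMap_smul K⟦X⟧ c z

theorem coeffPS_C_smul (n : ℕ) (c : K) (z : K⟦X⟧ ⊗[K] M) :
    coeffPS K M n (PowerSeries.C c • z) = c • coeffPS K M n z := by
  rw [C_smul_eq_smul, map_smul]

theorem coeffPS_baseChange (f : M →ₗ[K] N) (n : ℕ) (z : K⟦X⟧ ⊗[K] M) :
    coeffPS K N n (f.baseChange K⟦X⟧ z) = f (coeffPS K M n z) := by
  induction z using TensorProduct.induction_on with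
  | zero => simp
  | tmul g m => simp [coeffPS_tmul]
  | add x y hx hy => simp only [map_add, hx, hy]

theorem coeffPS_mem_of_mem_baseChange {P : Submodule K M} {z : K⟦X⟧ ⊗[K] M}
    (hz : z ∈ P.baseChange K⟦X⟧) (n : ℕ) : coeffPS K M n z ∈ P := by
  rw [Submodule.baseChange_eq_span] at hz
  induction hz using Submodule.span_induction generalizing n with
  | mem x hx =>
      obtain ⟨m, hm, rfl⟩ := hx
      rw [TensorProduct.mk_apply, coeffPS_one_tmul]
      split
      · exact hm
      · exact P.zero_mem
  | zero => simp
  | add x y _ _ hx hy => rw [map_add]; exact add_mem (hx n) (hy n)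
  | smul f x _ hx =>
      rw [coeffPS_smul]
      exact Submodule.sum_mem _ fun s _ => P.smul_mem _ (hx _)

theorem coeffPS_map (F : K⟦X⟧ ⊗[K] M →ₗ[K⟦X⟧] K⟦X⟧ ⊗[K] N) (n : ℕ) (y : K⟦X⟧ ⊗[K] M) :
    coeffPS K N n (F y) =
      ∑ s ∈ Finset.range (n + 1), coeffPS K N (n - s) (F (1 ⊗ₜ coeffPS K M s y)) := by
  induction y using TensorProduct.induction_on with
  | zero => simp
  | tmul f m =>
      rw [← smul_one_tmul, map_smul, coeffPS_smul]
      refine Finset.sum_congr rfl fun s _ => ?_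
      rw [smul_one_tmul, coeffPS_tmul, TensorProduct.tmul_smul, LinearMap.map_smul_of_tower,
        map_smul]
  | add x y hx hy => simp only [map_add, hx, hy, TensorProduct.tmul_add, ← Finset.sum_add_distrib]

end CoeffPS

section InducedDeformation

variable {K : Type*} [CommRing K] {U : Type*} [Ring U] [Module K U]
  {A : Type*} [Ring A] [Algebra K⟦X⟧ A] (Φ : K⟦X⟧ ⊗[K] U ≃ₗ[K⟦X⟧] A)

/-- The coefficient `π_n` of the product `π_t(a, b) = Φ⁻¹(Φ a • Φ b)` transported along `Φ`. -/
noncomputable def inducedCoeff (n : ℕ) (a a' : U) : U :=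
  coeffPS K U n (Φ.symm (Φ (1 ⊗ₜ a) * Φ (1 ⊗ₜ a')))

theorem coeffPS_one_symm_mul_left (a : U) (y : K⟦X⟧ ⊗[K] U) :
    coeffPS K U 1 (Φ.symm (Φ (1 ⊗ₜ a) * Φ y)) =
      inducedCoeff Φ 1 a (coeffPS K U 0 y) + inducedCoeff Φ 0 a (coeffPS K U 1 y) := by
  have h := coeffPS_map
    (Φ.symm.toLinearMap ∘ₗ LinearMap.mulLeft K⟦X⟧ (Φ (1 ⊗ₜ a)) ∘ₗ Φ.toLinearMap) 1 y
  simpa [Finset.sum_range_succ, inducedCoeff] using h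

theorem coeffPS_one_symm_mul_right (a : U) (y : K⟦X⟧ ⊗[K] U) :
    coeffPS K U 1 (Φ.symm (Φ y * Φ (1 ⊗ₜ a))) =
      inducedCoeff Φ 1 (coeffPS K U 0 y) a + inducedCoeff Φ 0 (coeffPS K U 1 y) a := by
  have h := coeffPS_map
    (Φ.symm.toLinearMap ∘ₗ LinearMap.mulRight K⟦X⟧ (Φ (1 ⊗ₜ a)) ∘ₗ Φ.toLinearMap) 1 y
  simpa [Finset.sum_range_succ, inducedCoeff] using h

theorem inducedCoeff_one_isHochschildCocycle (h0 : ∀ a a', inducedCoeff Φ 0 a a' = a * a')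
    (a a' a'' : U) :
    a * inducedCoeff Φ 1 a' a'' - inducedCoeff Φ 1 (a * a') a'' + inducedCoeff Φ 1 a (a' * a'')
      - inducedCoeff Φ 1 a a' * a'' = 0 := by
  set X := Φ.symm (Φ (1 ⊗ₜ a) * Φ (1 ⊗ₜ a')) with hX
  set Y := Φ.symm (Φ (1 ⊗ₜ a') * Φ (1 ⊗ₜ a'')) with hY
  have hassoc : Φ.symm (Φ (1 ⊗ₜ a) * Φ Y) = Φ.symm (Φ X * Φ (1 ⊗ₜ a'')) := by
    rw [hX, hY, Φ.apply_symm_apply, Φ.apply_symm_apply, mul_assoc]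
  have h1 := congrArg (coeffPS K U 1) hassoc
  rw [coeffPS_one_symm_mul_left Φ a Y, coeffPS_one_symm_mul_right Φ a'' X] at h1
  change inducedCoeff Φ 1 a (inducedCoeff Φ 0 a' a'') +
      inducedCoeff Φ 0 a (inducedCoeff Φ 1 a' a'') =
    inducedCoeff Φ 1 (inducedCoeff Φ 0 a a') a'' + inducedCoeff Φ 0 (inducedCoeff Φ 1 a a') a''
    at h1
  simp only [h0] at h1
  rw [← sub_eq_zero.mpr h1]
  abel

end InducedDeformation

section Lists

variable {I : Type*}

theorem List.exists_eq_append_of_not_isChain {r : I → I → Prop} :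
    ∀ l : List I, ¬ l.IsChain r → ∃ A a c B, l = A ++ a :: c :: B ∧ ¬ r a c
  | [], h => absurd List.isChain_nil h
  | [a], h => absurd (List.isChain_singleton a) h
  | a :: c :: t, h => by
      rw [List.isChain_cons_cons] at h
      by_cases hac : r a c
      · obtain ⟨A, x, y, B, hct, hxy⟩ :=
          List.exists_eq_append_of_not_isChain (c :: t) fun ht => h ⟨hac, ht⟩
        exact ⟨a :: A, x, y, B, by rw [hct, List.cons_append], hxy⟩
      · exact ⟨[], a, c, t, rfl, hac⟩

variable [LinearOrder I]

def inversionCount : List I → ℕ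
  | [] => 0
  | a :: t => t.countP (· < a) + inversionCount t

theorem inversionCount_swap_lt (A B : List I) {i j : I} (hji : j < i) :
    inversionCount (A ++ j :: i :: B) < inversionCount (A ++ i :: j :: B) := by
  induction A with
  | nil =>
      simp only [List.nil_append, inversionCount, List.countP_cons, decide_eq_true_eq,
        hji, not_lt_of_gt hji, if_true, if_false]
      omega
  | cons a A ih =>
      have hperm := ((List.Perm.swap i j B).append_left A).countP_eq (· < a)
      simp only [List.cons_append, inversionCount] at ih ⊢
      omega

end Lists

namespace ColorLie

section Monomials

variable {R : Type*} [CommRing R] {G : Type*} [CommGroup G] [DecidableEq G]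
  {ε : G → G → R} {L : Type*} [AddCommGroup L] [Module R L] (cl : ColorLie R G ε L)
  {I : Type*} (v : I → L)

theorem ιU_mul_ιU {g h : G} {a c : L} (ha : a ∈ cl.grading g) (hc : c ∈ cl.grading h) :
    cl.ιU a * cl.ιU c = ε g h • (cl.ιU c * cl.ιU a) + cl.ιU (cl.bracket a c) := by
  have hrel := RingQuot.mkAlgHom_rel R (Rel.mk ha hc)
  simp only [map_sub, map_mul, map_smul] at hrel
  simp only [ιU, LinearMap.comp_apply, AlgHom.toLinearMap_apply]
  rw [← hrel]
  abel

noncomputable def UMon (l : List I) : cl.U :=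
  (l.map fun i => cl.ιU (v i)).prod

@[simp]
theorem UMon_nil : cl.UMon v [] = 1 := rfl

@[simp]
theorem UMon_cons (i : I) (l : List I) : cl.UMon v (i :: l) = cl.ιU (v i) * cl.UMon v l := by
  simp [UMon]

@[simp]
theorem UMon_append (l l' : List I) : cl.UMon v (l ++ l') = cl.UMon v l * cl.UMon v l' := by
  simp [UMon]

theorem UMon_mem_Udeg (deg : I → G) (hv : ∀ i, v i ∈ cl.grading (deg i)) (l : List I) :
    cl.UMon v l ∈ cl.Udeg (l.map deg).prod := by
  refine Submodule.subset_span ⟨l.map fun i => (deg i, v i), ?_, ?_, ?_⟩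
  · simp only [List.mem_map]
    rintro _ ⟨i, _, rfl⟩
    exact hv i
  · simp [Function.comp_def]
  · simp [UMon, Function.comp_def]

theorem mem_span_UMon (hv : Submodule.span R (Set.range v) = ⊤) (u : cl.U) :
    u ∈ Submodule.span R (Set.range (cl.UMon v)) := by
  set S := Submodule.span R (Set.range (cl.UMon v))
  have hmul : S * S ≤ S := by
    rw [Submodule.span_mul_span, Submodule.span_le]
    rintro _ ⟨_, ⟨l, rfl⟩, _, ⟨l', rfl⟩, rfl⟩
    exact Submodule.subset_span ⟨l ++ l', cl.UMon_append v l l'⟩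
  obtain ⟨T, rfl⟩ := RingQuot.mkAlgHom_surjective R cl.Rel u
  induction T using TensorAlgebra.induction with
  | algebraMap r =>
      rw [AlgHom.commutes, Algebra.algebraMap_eq_smul_one]
      exact S.smul_mem r (Submodule.subset_span ⟨[], rfl⟩)
  | ι w =>
      have hw : w ∈ Submodule.span R (Set.range v) := hv ▸ Submodule.mem_top
      induction hw using Submodule.span_induction with
      | mem _ hx =>
          obtain ⟨i, rfl⟩ := hx
          exact Submodule.subset_span ⟨[i], by simp [ιU]⟩
      | zero => simp
      | add x y _ _ hx hy => rw [map_add, map_add]; exact add_mem hx hy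
      | smul r x _ hx => rw [map_smul, map_smul]; exact S.smul_mem r hx
  | mul x y hx hy => rw [map_mul]; exact hmul (Submodule.mul_mem_mul hx hy)
  | add x y hx hy => rw [map_add]; exact add_mem hx hy

theorem mul_ιU_mul_mem {deg : I → G} {S : Submodule R cl.U} (x y : cl.U) {g : G} {w : L}
    (hspan : cl.grading g ≤ Submodule.span R (v '' {i | deg i = g})) (hw : w ∈ cl.grading g)
    (h : ∀ i, deg i = g → x * cl.ιU (v i) * y ∈ S) : x * cl.ιU w * y ∈ S := by
  have hw' := hspan hw
  clear hw
  induction hw' using Submodule.span_induction with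
  | mem _ hu =>
      obtain ⟨i, hi, rfl⟩ := hu
      exact h i hi
  | zero => simp
  | add a a' _ _ ha ha' => rw [map_add, mul_add, add_mul]; exact add_mem ha ha'
  | smul r a _ ha => rw [map_smul, mul_smul_comm, smul_mul_assoc]; exact S.smul_mem r ha

end Monomials

section Straightening

variable {R : Type*} [CommRing R] {G : Type*} [CommGroup G] [DecidableEq G]
  {ε : G → G → R} {L : Type*} [AddCommGroup L] [Module R L] (cl : ColorLie R G ε L)
  {I : Type*} [LinearOrder I] (v : I → L) (deg : I → G)

noncomputable def admSpan (g : G) : Submodule R cl.U :=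
  Submodule.span R
    {u | ∃ c : List I, PBWAdmissible ε deg c ∧ (c.map deg).prod = g ∧ u = cl.UMon v c}

variable {v deg}

theorem ιU_mem_admSpan {g : G} (hspan : cl.grading g ≤ Submodule.span R (v '' {i | deg i = g}))
    {w : L} (hw : w ∈ cl.grading g) :
    cl.ιU w ∈ cl.admSpan v deg g := by
  have h := cl.mul_ιU_mul_mem v (S := cl.admSpan v deg g) 1 1 hspan hw fun i hi =>
    Submodule.subset_span ⟨[i], List.isChain_singleton i, by simp [hi], by simp⟩
  rwa [one_mul, mul_one] at h

variable (hv : ∀ i, v i ∈ cl.grading (deg i))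
  (hspan : ∀ g, cl.grading g ≤ Submodule.span R (v '' {i | deg i = g}))
  (hunit : ∀ g, ε g g ≠ 1 → IsUnit (1 - ε g g))
include hv hspan hunit

/-- PBW straightening: swapping an inversion lowers the inversion count, and the bracket term
it creates is a shorter monomial. -/
theorem UMon_mem_admSpan (l : List I) : cl.UMon v l ∈ cl.admSpan v deg (l.map deg).prod := by
  by_cases hadm : PBWAdmissible ε deg l
  · exact Submodule.subset_span ⟨l, hadm, rfl, rfl⟩
  obtain ⟨A, i, j, B, rfl, hbad⟩ := List.exists_eq_append_of_not_isChain l hadm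
  have hdeg : ∀ x y : I, ((A ++ x :: y :: B).map deg).prod =
      (A.map deg).prod * (deg x * deg y) * (B.map deg).prod := by
    intro x y
    simp only [List.map_append, List.map_cons, List.prod_append, List.prod_cons]
    ac_rfl
  have hbracket : cl.UMon v A * cl.ιU (cl.bracket (v i) (v j)) * cl.UMon v B ∈
      cl.admSpan v deg ((A ++ i :: j :: B).map deg).prod := by
    refine cl.mul_ιU_mul_mem v _ _ (hspan _) (cl.bracket_grade (hv i) (hv j)) fun k hk => ?_
    convert UMon_mem_admSpan (A ++ k :: B) using 2 <;> simp [hk, mul_assoc]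
  have hrel : cl.UMon v (A ++ i :: j :: B) =
      ε (deg i) (deg j) • cl.UMon v (A ++ j :: i :: B) +
        cl.UMon v A * cl.ιU (cl.bracket (v i) (v j)) * cl.UMon v B := by
    simp only [UMon_append, UMon_cons, ← mul_assoc (cl.ιU (v i)),
      cl.ιU_mul_ιU (hv i) (hv j)]
    simp only [mul_add, add_mul, mul_smul_comm, smul_mul_assoc, mul_assoc]
  simp only [not_or, not_and, not_lt] at hbad
  rcases hbad.1.lt_or_eq with hji | rfl
  · rw [hrel]
    refine add_mem (Submodule.smul_mem _ _ ?_) hbracket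
    rw [hdeg, mul_comm (deg i), ← hdeg]
    exact UMon_mem_admSpan (A ++ j :: i :: B)
  · obtain ⟨u, hu⟩ := hunit (deg j) (hbad.2 rfl)
    have hsq : cl.UMon v (A ++ j :: j :: B) =
        (↑u⁻¹ : R) • (cl.UMon v A * cl.ιU (cl.bracket (v j) (v j)) * cl.UMon v B) := by
      have h1 : (1 - ε (deg j) (deg j)) • cl.UMon v (A ++ j :: j :: B) =
          cl.UMon v A * cl.ιU (cl.bracket (v j) (v j)) * cl.UMon v B := by
        calc (1 - ε (deg j) (deg j)) • cl.UMon v (A ++ j :: j :: B)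
            = (1 : R) • cl.UMon v (A ++ j :: j :: B) -
                ε (deg j) (deg j) • cl.UMon v (A ++ j :: j :: B) :=
                sub_smul (1 : R) (ε (deg j) (deg j)) (cl.UMon v (A ++ j :: j :: B))
          _ = _ := by rw [one_smul]; exact sub_eq_iff_eq_add'.mpr hrel
      rw [← h1, ← hu, smul_smul, Units.inv_mul, one_smul]
    rw [hsq]
    exact Submodule.smul_mem _ _ hbracket
termination_by (l.length, inversionCount l)
decreasing_by
  all_goals subst_vars
  · exact Prod.Lex.left _ _ (by simp)
  · exact Prod.Lex.right' _ (by simp) (inversionCount_swap_lt A B hji)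

theorem mul_mem_admSpan {g h : G} {x y : cl.U} (hx : x ∈ cl.admSpan v deg g)
    (hy : y ∈ cl.admSpan v deg h) : x * y ∈ cl.admSpan v deg (g * h) := by
  have hmul : cl.admSpan v deg g * cl.admSpan v deg h ≤ cl.admSpan v deg (g * h) := by
    rw [admSpan, admSpan, Submodule.span_mul_span, Submodule.span_le]
    rintro _ ⟨_, ⟨c, -, rfl, rfl⟩, _, ⟨c', -, rfl, rfl⟩, rfl⟩
    simpa using cl.UMon_mem_admSpan hv hspan hunit (c ++ c')
  exact hmul (Submodule.mul_mem_mul hx hy)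

theorem Udeg_le_admSpan (g : G) : cl.Udeg g ≤ cl.admSpan v deg g := by
  rw [Udeg, Submodule.span_le]
  rintro _ ⟨l, hl, rfl, rfl⟩
  induction l with
  | nil => exact Submodule.subset_span ⟨[], List.isChain_nil, rfl, rfl⟩
  | cons q l ih =>
      simp only [List.map_cons, List.prod_cons]
      exact cl.mul_mem_admSpan hv hspan hunit (cl.ιU_mem_admSpan (hspan _) (hl q (by simp)))
        (ih fun p hp => hl p (by simp [hp]))

theorem span_admissible_eq_top (hv_top : Submodule.span R (Set.range v) = ⊤) :
    Submodule.span R {u | ∃ c : List I, PBWAdmissible ε deg c ∧ u = cl.UMon v c} = ⊤ := by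
  refine eq_top_iff.mpr fun u _ => ?_
  refine Submodule.span_le.mpr ?_ (cl.mem_span_UMon v hv_top u)
  rintro _ ⟨l, rfl⟩
  refine Submodule.span_le.mpr ?_ (cl.UMon_mem_admSpan hv hspan hunit l)
  rintro _ ⟨c, hc, -, rfl⟩
  exact Submodule.subset_span ⟨c, hc, rfl⟩

end Straightening

theorem grading_le_span_basis {R : Type*} [CommRing R] {G : Type*} [CommGroup G]
    [DecidableEq G] {ε : G → G → R} {L : Type*} [AddCommGroup L] [Module R L]
    (cl : ColorLie R G ε L) {I : Type*} (b : Module.Basis I R L) {deg : I → G}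
    (hb : ∀ i, b i ∈ cl.grading (deg i)) (g : G) :
    cl.grading g ≤ Submodule.span R (b '' {i | deg i = g}) := by
  let := cl.internal.chooseDecomposition
  have hcomp : ∀ x : L, (DirectSum.decompose cl.grading x g : L) ∈
      Submodule.span R (b '' {i | deg i = g}) := by
    intro x
    induction b.mem_span x using Submodule.span_induction with
    | mem _ hx =>
        obtain ⟨i, rfl⟩ := hx
        rw [DirectSum.decompose_of_mem _ (hb i)]
        by_cases hi : deg i = g
        · subst hi
          rw [DirectSum.of_eq_same]
          exact Submodule.subset_span ⟨i, rfl, rfl⟩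
        · rw [DirectSum.of_eq_of_ne _ _ _ (Ne.symm hi), ZeroMemClass.coe_zero]
          exact zero_mem _
    | zero => simp
    | add x y _ _ hx hy => simpa using add_mem hx hy
    | smul r x _ hx =>
        rw [DirectSum.decompose_smul, DirectSum.smul_apply, SetLike.val_smul]
        exact Submodule.smul_mem _ r hx
  intro w hw
  simpa [DirectSum.decompose_of_mem_same _ hw] using hcomp w

section ReductionModT

variable {K : Type*} [CommRing K] {G : Type*} [CommGroup G] [DecidableEq G] {ε : G → G → K}
  {L : Type*} [AddCommGroup L] [Module K L] (cl : ColorLie K G ε L)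
  (clt : ColorLie K⟦X⟧ G (fun g h => PowerSeries.C (ε g h)) (K⟦X⟧ ⊗[K] L))
  (hgr : ∀ g, clt.grading g ≤ (cl.grading g).baseChange K⟦X⟧)
  (hbr : ∀ a a' : L,
    coeffPS K L 0 (clt.bracket ((1 : K⟦X⟧) ⊗ₜ a) (1 ⊗ₜ a')) = cl.bracket a a')

include hbr in
theorem coeffPS_zero_bracket (z z' : K⟦X⟧ ⊗[K] L) :
    coeffPS K L 0 (clt.bracket z z') = cl.bracket (coeffPS K L 0 z) (coeffPS K L 0 z') := by
  induction z using TensorProduct.induction_on with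
  | zero => simp
  | add x y hx hy => simp only [map_add, LinearMap.add_apply, hx, hy]
  | tmul f a =>
      induction z' using TensorProduct.induction_on with
      | zero => simp
      | add x y hx hy => simp only [map_add, hx, hy]
      | tmul f' a' =>
          rw [← smul_one_tmul f a, ← smul_one_tmul f' a']
          simp only [map_smul, LinearMap.smul_apply, coeffPS_zero_smul, hbr, coeffPS_one_tmul,
            if_true, smul_smul, map_mul, mul_comm]

noncomputable def reduceModT : clt.U →+* cl.U :=
  letI : Algebra K⟦X⟧ cl.U := Algebra.compHom cl.U PowerSeries.constantCoeff
  RingQuot.lift ⟨(TensorAlgebra.lift K⟦X⟧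
    { toFun := fun z => cl.ιU (coeffPS K L 0 z)
      map_add' := by simp
      map_smul' := fun f z => by
        rw [coeffPS_zero_smul, map_smul]
        rfl }).toRingHom, by
    rintro _ _ ⟨ha, hb⟩
    simp only [AlgHom.toRingHom_eq_coe, RingHom.coe_coe, map_sub, map_mul, map_smul,
      TensorAlgebra.lift_ι_apply, LinearMap.coe_mk, AddHom.coe_mk, coeffPS_zero_bracket cl clt hbr]
    rw [cl.ιU_mul_ιU (coeffPS_mem_of_mem_baseChange (hgr _ ha) 0)
      (coeffPS_mem_of_mem_baseChange (hgr _ hb) 0), Algebra.compHom_smul_def,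
      PowerSeries.constantCoeff_C]
    abel⟩

variable {cl clt hgr hbr}

theorem reduceModT_mkAlgHom (T : TensorAlgebra K⟦X⟧ (K⟦X⟧ ⊗[K] L)) :
    reduceModT cl clt hgr hbr (RingQuot.mkAlgHom K⟦X⟧ clt.Rel T) =
      reduceModT cl clt hgr hbr (RingQuot.mkRingHom clt.Rel T) := by
  rw [← RingQuot.mkAlgHom_coe K⟦X⟧]
  rfl

@[simp]
theorem reduceModT_ιU (z : K⟦X⟧ ⊗[K] L) :
    reduceModT cl clt hgr hbr (clt.ιU z) = cl.ιU (coeffPS K L 0 z) := by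
  rw [ιU, LinearMap.comp_apply, AlgHom.toLinearMap_apply, reduceModT_mkAlgHom, reduceModT,
    RingQuot.lift_mkRingHom_apply]
  let : Algebra K⟦X⟧ cl.U := Algebra.compHom cl.U PowerSeries.constantCoeff
  exact TensorAlgebra.lift_ι_apply _ z

theorem reduceModT_smul (f : K⟦X⟧) (x : clt.U) :
    reduceModT cl clt hgr hbr (f • x) =
      PowerSeries.constantCoeff f • reduceModT cl clt hgr hbr x := by
  rw [Algebra.smul_def, map_mul, Algebra.smul_def,
    ← AlgHom.commutes (RingQuot.mkAlgHom K⟦X⟧ clt.Rel), reduceModT_mkAlgHom, reduceModT,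
    RingQuot.lift_mkRingHom_apply]
  let : Algebra K⟦X⟧ cl.U := Algebra.compHom cl.U PowerSeries.constantCoeff
  exact congrArg (· * _) (AlgHom.commutes _ f)

theorem reduceModT_UMon {I : Type*} (v : I → L) (l : List I) :
    reduceModT cl clt hgr hbr (clt.UMon (fun i => (1 : K⟦X⟧) ⊗ₜ v i) l) = cl.UMon v l := by
  simp [UMon, map_list_prod, Function.comp_def, coeffPS_one_tmul]

end ReductionModT

end ColorLie

theorem PBWAdmissible_map_iff {R S : Type*} [CommRing R] [CommRing S] {G : Type*} [CommGroup G]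
    {I : Type*} [LinearOrder I] {φ : R →+* S} (hφ : Function.Injective φ) (ε : G → G → R)
    (deg : I → G) (l : List I) :
    PBWAdmissible (fun g h => φ (ε g h)) deg l ↔ PBWAdmissible ε deg l := by
  simp only [PBWAdmissible, map_eq_one_iff φ hφ]

theorem PowerSeries.isUnit_one_sub_C {K : Type*} [Field K] {x : K} (h : x ≠ 1) :
    IsUnit (1 - PowerSeries.C x) := by
  rw [PowerSeries.isUnit_iff_constantCoeff, map_sub, map_one, PowerSeries.constantCoeff_C]
  exact (sub_ne_zero.mpr (Ne.symm h)).isUnit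

namespace ColorLie

section PBW

variable {K : Type*} [Field K] {G : Type*} [CommGroup G] [DecidableEq G] {ε : G → G → K}
  {L : Type*} [AddCommGroup L] [Module K L] {I : Type*}
  {cl : ColorLie K G ε L} {clt : ColorLie K⟦X⟧ G (fun g h => PowerSeries.C (ε g h)) (K⟦X⟧ ⊗[K] L)}
  {b : Module.Basis I K L} {deg : I → G}
  (hb : ∀ i, b i ∈ cl.grading (deg i))
  (hgrt : ∀ g, clt.grading g = (cl.grading g).baseChange K⟦X⟧)

include hb hgrt in
theorem grading_le_span_one_tmul_basis (g : G) :
    clt.grading g ≤ Submodule.span K⟦X⟧ ((fun i => (1 : K⟦X⟧) ⊗ₜ b i) '' {i | deg i = g}) := by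
  rw [hgrt]
  convert Submodule.baseChange_mono K⟦X⟧ (cl.grading_le_span_basis b hb g) using 1
  rw [Submodule.baseChange_span, Set.image_image]
  rfl

variable [LinearOrder I] (Φ : (K⟦X⟧ ⊗[K] cl.U) ≃ₗ[K⟦X⟧] clt.U)
  (hΦ : ∀ l : List I, PBWAdmissible ε deg l →
    Φ ((1 : K⟦X⟧) ⊗ₜ[K] (l.map fun i => cl.ιU (b i)).prod) =
      (l.map fun i => clt.ιU ((1 : K⟦X⟧) ⊗ₜ[K] b i)).prod)

include hΦ in
theorem Φ_one_tmul_ιU (v : L) : Φ (1 ⊗ₜ cl.ιU v) = clt.ιU (1 ⊗ₜ v) := by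
  have hbasis : ((Φ.toLinearMap.restrictScalars K) ∘ₗ TensorProduct.mk K K⟦X⟧ cl.U 1 ∘ₗ cl.ιU) =
      (clt.ιU.restrictScalars K) ∘ₗ TensorProduct.mk K K⟦X⟧ L 1 :=
    b.ext fun i => by simpa using hΦ [i] (List.isChain_singleton i)
  exact LinearMap.congr_fun hbasis v

include hΦ in
theorem coeffPS_Φ_symm_ιU (n : ℕ) (z : K⟦X⟧ ⊗[K] L) :
    coeffPS K cl.U n (Φ.symm (clt.ιU z)) = cl.ιU (coeffPS K L n z) := by
  have hsymm : Φ.symm (clt.ιU z) = cl.ιU.baseChange K⟦X⟧ z := by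
    induction z using TensorProduct.induction_on with
    | zero => simp
    | tmul f w =>
        rw [← smul_one_tmul, map_smul, map_smul, ← Φ_one_tmul_ιU Φ hΦ, Φ.symm_apply_apply,
          map_smul, LinearMap.baseChange_tmul]
    | add x y hx hy => simp only [map_add, hx, hy]
  rw [hsymm, coeffPS_baseChange]

include hgrt hΦ in
theorem inducedCoeff_ιU_ιU (n : ℕ) {g h : G} {x y : L} (hx : x ∈ cl.grading g)
    (hy : y ∈ cl.grading h) :
    inducedCoeff Φ n (cl.ιU x) (cl.ιU y) = ε g h • inducedCoeff Φ n (cl.ιU y) (cl.ιU x) +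
      cl.ιU (coeffPS K L n (clt.bracket (1 ⊗ₜ x) (1 ⊗ₜ y))) := by
  have hxt : (1 : K⟦X⟧) ⊗ₜ x ∈ clt.grading g :=
    hgrt g ▸ Submodule.tmul_mem_baseChange_of_mem 1 hx
  have hyt : (1 : K⟦X⟧) ⊗ₜ y ∈ clt.grading h :=
    hgrt h ▸ Submodule.tmul_mem_baseChange_of_mem 1 hy
  simp only [inducedCoeff, Φ_one_tmul_ιU Φ hΦ, clt.ιU_mul_ιU hxt hyt, map_add, map_smul,
    coeffPS_C_smul, coeffPS_Φ_symm_ιU Φ hΦ]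

variable (hbr : ∀ a a' : L,
  coeffPS K L 0 (clt.bracket ((1 : K⟦X⟧) ⊗ₜ a) (1 ⊗ₜ a')) = cl.bracket a a')

include hb hΦ in
theorem reduceModT_Φ (x : K⟦X⟧ ⊗[K] cl.U) :
    reduceModT cl clt (fun g => (hgrt g).le) hbr (Φ x) = coeffPS K cl.U 0 x := by
  have hone : ∀ u : cl.U, reduceModT cl clt (fun g => (hgrt g).le) hbr (Φ (1 ⊗ₜ u)) = u := by
    intro u
    have hu : u ∈ Submodule.span K {x | ∃ c, PBWAdmissible ε deg c ∧ x = cl.UMon b c} := by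
      rw [cl.span_admissible_eq_top hb (cl.grading_le_span_basis b hb)
        (fun _ h => (sub_ne_zero.mpr (Ne.symm h)).isUnit) b.span_eq]
      trivial
    induction hu using Submodule.span_induction with
    | mem _ hx =>
        obtain ⟨c, hc, rfl⟩ := hx
        rw [show Φ (1 ⊗ₜ cl.UMon b c) = clt.UMon _ c from hΦ c hc, reduceModT_UMon]
    | zero => simp
    | add x y _ _ hx hy => rw [TensorProduct.tmul_add, map_add, map_add, hx, hy]
    | smul r x _ hx =>
        rw [TensorProduct.tmul_smul, ← C_smul_eq_smul, map_smul, reduceModT_smul,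
          PowerSeries.constantCoeff_C, hx]
  induction x using TensorProduct.induction_on with
  | zero => simp
  | tmul f u =>
      rw [← smul_one_tmul, map_smul, reduceModT_smul, hone, coeffPS_zero_smul, coeffPS_one_tmul,
        if_pos rfl]
  | add x y hx hy => rw [map_add, map_add, hx, hy, map_add]

include hb hgrt hΦ hbr in
theorem inducedCoeff_zero (a a' : cl.U) : inducedCoeff Φ 0 a a' = a * a' := by
  rw [inducedCoeff, ← reduceModT_Φ hb hgrt Φ hΦ hbr, Φ.apply_symm_apply, map_mul,
    reduceModT_Φ hb hgrt Φ hΦ hbr, reduceModT_Φ hb hgrt Φ hΦ hbr, coeffPS_one_tmul,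
    coeffPS_one_tmul, if_pos rfl, if_pos rfl]

include hΦ in
theorem Φ_one_tmul_mem_admSpan {g : G} {a : cl.U} (ha : a ∈ cl.admSpan b deg g) :
    Φ (1 ⊗ₜ a) ∈ clt.admSpan (fun i => (1 : K⟦X⟧) ⊗ₜ b i) deg g := by
  induction ha using Submodule.span_induction with
  | mem _ hx =>
      obtain ⟨c, hc, rfl, rfl⟩ := hx
      rw [show Φ (1 ⊗ₜ cl.UMon b c) = clt.UMon _ c from hΦ c hc]
      exact Submodule.subset_span
        ⟨c, (PBWAdmissible_map_iff PowerSeries.C_injective ε deg c).mpr hc, rfl, rfl⟩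
  | zero => simp
  | add x y _ _ hx hy => rw [TensorProduct.tmul_add, map_add]; exact add_mem hx hy
  | smul r x _ hx =>
      rw [TensorProduct.tmul_smul, ← C_smul_eq_smul, map_smul]
      exact Submodule.smul_mem _ _ hx

include hb hΦ in
theorem Φ_symm_mem_baseChange {g : G} {y : clt.U}
    (hy : y ∈ clt.admSpan (fun i => (1 : K⟦X⟧) ⊗ₜ b i) deg g) :
    Φ.symm y ∈ (cl.Udeg g).baseChange K⟦X⟧ := by
  refine (Submodule.span_le (p := ((cl.Udeg g).baseChange K⟦X⟧).comap Φ.symm.toLinearMap)).mpr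
    ?_ hy
  rintro _ ⟨c, hc, rfl, rfl⟩
  have hc' := (PBWAdmissible_map_iff PowerSeries.C_injective ε deg c).mp hc
  rw [SetLike.mem_coe, Submodule.mem_comap, LinearEquiv.coe_coe,
    show clt.UMon _ c = Φ (1 ⊗ₜ cl.UMon b c) from (hΦ c hc').symm, Φ.symm_apply_apply]
  exact Submodule.tmul_mem_baseChange_of_mem 1 (cl.UMon_mem_Udeg b deg hb c)

include hb hgrt hΦ in
theorem inducedCoeff_mem_Udeg (n : ℕ) {g h : G} {a a' : cl.U} (ha : a ∈ cl.Udeg g)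
    (ha' : a' ∈ cl.Udeg h) : inducedCoeff Φ n a a' ∈ cl.Udeg (g * h) := by
  have hunit : ∀ k : G, ε k k ≠ 1 → IsUnit (1 - ε k k) :=
    fun _ hne => (sub_ne_zero.mpr (Ne.symm hne)).isUnit
  have hspan := cl.grading_le_span_basis b hb
  have hprod := clt.mul_mem_admSpan
    (fun i => hgrt _ ▸ Submodule.tmul_mem_baseChange_of_mem 1 (hb i))
    (grading_le_span_one_tmul_basis hb hgrt)
    (fun _ hne => PowerSeries.isUnit_one_sub_C fun h1 => hne (by rw [h1, map_one]))
    (Φ_one_tmul_mem_admSpan Φ hΦ (cl.Udeg_le_admSpan hb hspan hunit g ha))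
    (Φ_one_tmul_mem_admSpan Φ hΦ (cl.Udeg_le_admSpan hb hspan hunit h ha'))
  exact coeffPS_mem_of_mem_baseChange (Φ_symm_mem_baseChange hb Φ hΦ hprod) n

end PBW

end ColorLie

theorem pi_one_is_gradedHochschildCocycle_general
    {K : Type*} [Field K] {G : Type*} [CommGroup G] [DecidableEq G]
    {L : Type*} [AddCommGroup L] [Module K L]
    {I : Type*} [LinearOrder I]
    {ε : G → G → K} (cl : ColorLie K G ε L)
    (D : cl.Deformation)
    (b : Module.Basis I K L) (deg : I → G) (hb : ∀ i, b i ∈ cl.grading (deg i))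
    (clt : ColorLie (PowerSeries K) G (fun g h => PowerSeries.C (ε g h))
      (PowerSeries K ⊗[K] L))
    (hgrt : ∀ g : G, clt.grading g = (cl.grading g).baseChange (PowerSeries K))
    (hbrt : ∀ (n : ℕ) (a a' : L),
      coeffPS K L n (clt.bracket ((1 : PowerSeries K) ⊗ₜ[K] a)
        ((1 : PowerSeries K) ⊗ₜ[K] a')) = D.μ n a a')
    -- the PBW isomorphism `Φ`
    (Φ : (PowerSeries K ⊗[K] cl.U) ≃ₗ[PowerSeries K] clt.U)
    (hΦ : ∀ l : List I, PBWAdmissible ε deg l →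
      Φ ((1 : PowerSeries K) ⊗ₜ[K] (l.map fun i => cl.ιU (b i)).prod) =
        (l.map fun i => clt.ιU ((1 : PowerSeries K) ⊗ₜ[K] b i)).prod)
    -- the coefficients of the induced deformation `π_t(a,b) = Φ⁻¹(Φ(a) • Φ(b))`
    (p : ℕ → cl.U →ₗ[K] cl.U →ₗ[K] cl.U)
    (hp : ∀ (n : ℕ) (a a' : cl.U),
      p n a a' = coeffPS K cl.U n
        (Φ.symm (Φ ((1 : PowerSeries K) ⊗ₜ[K] a) *
          Φ ((1 : PowerSeries K) ⊗ₜ[K] a')))) :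
    -- `π₁` is homogeneous of degree `e`
    (∀ {g h : G} {a a' : cl.U}, a ∈ cl.Udeg g → a' ∈ cl.Udeg h →
      p 1 a a' ∈ cl.Udeg (g * h)) ∧
    -- `π₁` is a Hochschild 2-cocycle of `U(g)`
    (∀ a a' a'' : cl.U,
      a * p 1 a' a'' - p 1 (a * a') a'' + p 1 a (a' * a'') - p 1 a a' * a'' = 0) ∧
    -- the restriction of `π₁` to `g` recovers `μ₁`
    (∀ {g h : G} {X Y : L}, X ∈ cl.grading g → Y ∈ cl.grading h →
      cl.ιU (D.μ 1 X Y) =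
        p 1 (cl.ιU X) (cl.ιU Y) - ε g h • p 1 (cl.ιU Y) (cl.ιU X)) := by
  have hp' : ∀ n a a', p n a a' = inducedCoeff Φ n a a' := hp
  have hbr0 : ∀ a a' : L, coeffPS K L 0 (clt.bracket (1 ⊗ₜ a) (1 ⊗ₜ a')) = cl.bracket a a' :=
    fun a a' => by rw [hbrt, D.init]
  simp only [hp']
  refine ⟨fun ha ha' => ColorLie.inducedCoeff_mem_Udeg hb hgrt Φ hΦ 1 ha ha',
    inducedCoeff_one_isHochschildCocycle Φ (ColorLie.inducedCoeff_zero hb hgrt Φ hΦ hbr0),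
    fun hX hY => ?_⟩
  rw [ColorLie.inducedCoeff_ιU_ιU hgrt Φ hΦ 1 hX hY, hbrt, add_sub_cancel_left]

set_option synthInstance.maxHeartbeats 1000000 in
/-- Let `(g[[t]], μ_t)` be a graded deformation of a
finite-dimensional color Lie algebra `g` and `π_t = Σ tⁿ π_n` the induced graded
associative deformation of `U(g)` obtained via the PBW isomorphism `Φ` with
`U(g[[t]])`.  Then `π₁` is a graded Hochschild 2-cocycle of `U(g)` with
coefficients in `U(g)`, and its restriction to `g` satisfies
`μ₁(X,Y) = π₁(X,Y) - ε(|X|,|Y|) π₁(Y,X)` for homogeneous `X, Y ∈ g`. -/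
theorem pi_one_is_gradedHochschildCocycle
    {K : Type*} [Field K] [CharZero K] {G : Type*} [CommGroup G] [DecidableEq G]
    {L : Type*} [AddCommGroup L] [Module K L] [FiniteDimensional K L]
    {I : Type*} [Fintype I] [LinearOrder I]
    {ε : G → G → K} (hε : IsBicharacter ε) (cl : ColorLie K G ε L)
    (D : cl.Deformation)
    (b : Module.Basis I K L) (deg : I → G) (hb : ∀ i, b i ∈ cl.grading (deg i))
    (clt : ColorLie (PowerSeries K) G (fun g h => PowerSeries.C (ε g h))
      (PowerSeries K ⊗[K] L))
    (hgrt : ∀ g : G, clt.grading g = (cl.grading g).baseChange (PowerSeries K))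
    (hbrt : ∀ (n : ℕ) (a a' : L),
      coeffPS K L n (clt.bracket ((1 : PowerSeries K) ⊗ₜ[K] a)
        ((1 : PowerSeries K) ⊗ₜ[K] a')) = D.μ n a a')
    -- the PBW isomorphism `Φ`
    (Φ : (PowerSeries K ⊗[K] cl.U) ≃ₗ[PowerSeries K] clt.U)
    (hΦ : ∀ l : List I, PBWAdmissible ε deg l →
      Φ ((1 : PowerSeries K) ⊗ₜ[K] (l.map fun i => cl.ιU (b i)).prod) =
        (l.map fun i => clt.ιU ((1 : PowerSeries K) ⊗ₜ[K] b i)).prod)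
    -- the coefficients of the induced deformation `π_t(a,b) = Φ⁻¹(Φ(a) • Φ(b))`
    (p : ℕ → cl.U →ₗ[K] cl.U →ₗ[K] cl.U)
    (hp : ∀ (n : ℕ) (a a' : cl.U),
      p n a a' = coeffPS K cl.U n
        (Φ.symm (Φ ((1 : PowerSeries K) ⊗ₜ[K] a) *
          Φ ((1 : PowerSeries K) ⊗ₜ[K] a')))) :
    -- `π₁` is homogeneous of degree `e`
    (∀ {g h : G} {a a' : cl.U}, a ∈ cl.Udeg g → a' ∈ cl.Udeg h →
      p 1 a a' ∈ cl.Udeg (g * h)) ∧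
    -- `π₁` is a Hochschild 2-cocycle of `U(g)`
    (∀ a a' a'' : cl.U,
      a * p 1 a' a'' - p 1 (a * a') a'' + p 1 a (a' * a'') - p 1 a a' * a'' = 0) ∧
    -- the restriction of `π₁` to `g` recovers `μ₁`
    (∀ {g h : G} {X Y : L}, X ∈ cl.grading g → Y ∈ cl.grading h →
      cl.ιU (D.μ 1 X Y) =
        p 1 (cl.ιU X) (cl.ιU Y) - ε g h • p 1 (cl.ιU Y) (cl.ιU X)) :=
  pi_one_is_gradedHochschildCocycle_general cl D b deg hb clt hgrt hbrt Φ hΦ p hp
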